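/- For every integer k ≥ 3 and every even positive integer n, the number of alternating permutations of length n avoiding 12⋯k equals the number of alternating permutations of length n avoiding 12⋯(k-2)k(k-1). -/

import Mathlib

/-!
Write k = m + 3 and call a position of a permutation *high* when it ends an increasing
subsequence of length k - 1; call two permutations equivalent when they have the same high
positions and the same values off them. An occurrence of 12⋯k amounts to high positions a < b
with p a < p b, and swapping these two values stays in the class and lowers ∑ j * p j. An
occurrence of 12⋯(k-2)k(k-1) amounts to high positions a < b with p b < p a and an entry ending
an increasing subsequence of length k - 2 below-left of both; swapping stays in the class and
raises ∑ j * p j. So every class contains an avoider of each pattern (minimise, resp. maximise,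
the weight), and comparing two avoiders at the leftmost position where they differ shows that
it is unique. For alternating permutations of even length, an avoider of either pattern has
all its high positions at peaks, so alternation passes to every permutation in its class.
-/

open Function

def Contains {n k : ℕ} (p : Fin n → Fin n) (q : Fin k → Fin k) : Prop :=
  ∃ f : Fin k → Fin n, StrictMono f ∧ ∀ a b : Fin k, q a < q b ↔ p (f a) < p (f b)

def Avoids {n k : ℕ} (p : Fin n → Fin n) (q : Fin k → Fin k) : Prop :=
  ¬ Contains p q

noncomputable def rank {n : ℕ} (p : Fin n → Fin n) (i : Fin n) : ℕ :=
  sSup {m | ∃ f : Fin m → Fin n, StrictMono f ∧ StrictMono (p ∘ f) ∧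
    ∃ hm : 0 < m, f ⟨m - 1, Nat.sub_lt hm Nat.one_pos⟩ = i}

noncomputable def corank {n : ℕ} (p : Fin n → Fin n) (i : Fin n) : ℕ :=
  sSup {m | ∃ f : Fin m → Fin n, StrictMono f ∧ StrictMono (p ∘ f) ∧
    ∃ hm : 0 < m, f ⟨0, hm⟩ = i}

def Alternating {n : ℕ} (p : Fin n → Fin n) : Prop :=
  ∀ (i : ℕ) (h : i + 1 < n), p ⟨i, by omega⟩ < p ⟨i + 1, h⟩ ↔ i % 2 = 0

def IsPeak {n : ℕ} (p : Fin n → Fin n) (i : Fin n) : Prop :=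
  (∀ _ : 0 < i.1, p ⟨i.1 - 1, lt_of_le_of_lt (Nat.sub_le _ _) i.2⟩ < p i) ∧
  (∀ h : i.1 + 1 < n, p ⟨i.1 + 1, h⟩ < p i)

def IsValley {n : ℕ} (p : Fin n → Fin n) (i : Fin n) : Prop :=
  (∀ _ : 0 < i.1, p i < p ⟨i.1 - 1, lt_of_le_of_lt (Nat.sub_le _ _) i.2⟩) ∧
  (∀ h : i.1 + 1 < n, p i < p ⟨i.1 + 1, h⟩)

namespace Fin

variable {m : ℕ} {α : Type*}

theorem strictMono_snoc_iff [Preorder α] {g : Fin (m + 1) → α} {x : α} :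
    StrictMono (snoc g x : Fin (m + 2) → α) ↔ StrictMono g ∧ g (last m) < x := by
  simp [strictMono_iff_lt_succ (f := (snoc g x : Fin (m + 2) → α)), forall_fin_succ',
    -castSucc_succ, succ_castSucc, strictMono_iff_lt_succ (f := g)]

theorem snoc_snoc_comp_swap (g : Fin (m + 1) → α) (a b : α) :
    (snoc (snoc g a) b : Fin (m + 3) → α) ∘ Equiv.swap (last (m + 1)).castSucc (last (m + 2)) =
      snoc (snoc g b) a := by
  funext i
  induction i using lastCases with
  | last => simp
  | cast i =>
    induction i using lastCases with
    | last => simp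
    | cast i =>
      rw [Function.comp_apply, Equiv.swap_apply_of_ne_of_ne (by simp [Fin.ext_iff]; omega)
        (by simp [Fin.ext_iff]; omega)]
      simp

theorem exists_eq_snoc_snoc (f : Fin (m + 3) → α) :
    ∃ g a b, f = snoc (snoc g a) b :=
  ⟨init (init f), init f (last _), f (last _), by rw [snoc_init_self, snoc_init_self]⟩

end Fin

section

variable {n m : ℕ}

abbrev swapLastTwo (m : ℕ) : Equiv.Perm (Fin (m + 3)) :=
  Equiv.swap (Fin.last (m + 1)).castSucc (Fin.last (m + 2))

theorem contains_iff_exists_strictMono {k : ℕ} (p : Fin n → Fin n) (q : Equiv.Perm (Fin k)) :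
    Contains p q ↔ ∃ f : Fin k → Fin n, StrictMono f ∧ StrictMono (p ∘ f ∘ q.symm) := by
  refine exists_congr fun f => and_congr_right fun _ => ⟨fun h i j hij => ?_, fun h a b => ?_⟩
  · exact (h _ _).1 (by simpa using hij)
  · simpa using (h.lt_iff_lt (a := q a) (b := q b)).symm

def EndsIncreasing (m : ℕ) (p : Fin n → Fin n) (e : Fin n) : Prop :=
  ∃ g : Fin (m + 1) → Fin n, StrictMono g ∧ StrictMono (p ∘ g) ∧ g (Fin.last m) = e

theorem contains_id_iff (p : Fin n → Fin n) :
    Contains p (id : Fin (m + 3) → Fin (m + 3)) ↔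
      ∃ e a b, EndsIncreasing m p e ∧ e < a ∧ a < b ∧ p e < p a ∧ p a < p b := by
  rw [← Equiv.coe_refl, contains_iff_exists_strictMono]
  constructor
  · rintro ⟨f, hf, hpf⟩
    obtain ⟨g, a, b, rfl⟩ := Fin.exists_eq_snoc_snoc f
    simp only [Equiv.refl_symm, Equiv.coe_refl, Function.comp_id, Fin.comp_snoc,
      Fin.strictMono_snoc_iff, Fin.snoc_last, Function.comp_apply] at hf hpf
    exact ⟨g (Fin.last m), a, b, ⟨g, hf.1.1, hpf.1.1, rfl⟩, hf.1.2, hf.2, hpf.1.2, hpf.2⟩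
  · rintro ⟨_, a, b, ⟨g, hg, hpg, rfl⟩, hea, hab, hpea, hpab⟩
    refine ⟨Fin.snoc (Fin.snoc g a) b, ?_, ?_⟩ <;>
      simp only [Equiv.refl_symm, Equiv.coe_refl, Function.comp_id, Fin.comp_snoc,
        Fin.strictMono_snoc_iff, Fin.snoc_last, Function.comp_apply]
    exacts [⟨⟨hg, hea⟩, hab⟩, ⟨⟨hpg, hpea⟩, hpab⟩]

theorem contains_swap_iff (p : Fin n → Fin n) :
    Contains p (swapLastTwo m) ↔
      ∃ e a b, EndsIncreasing m p e ∧ e < a ∧ a < b ∧ p e < p b ∧ p b < p a := by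
  rw [contains_iff_exists_strictMono, swapLastTwo, Equiv.symm_swap]
  constructor
  · rintro ⟨f, hf, hpf⟩
    obtain ⟨g, a, b, rfl⟩ := Fin.exists_eq_snoc_snoc f
    simp only [Fin.snoc_snoc_comp_swap, Fin.comp_snoc, Fin.strictMono_snoc_iff, Fin.snoc_last,
      Function.comp_apply] at hf hpf
    exact ⟨g (Fin.last m), a, b, ⟨g, hf.1.1, hpf.1.1, rfl⟩, hf.1.2, hf.2, hpf.1.2, hpf.2⟩
  · rintro ⟨_, a, b, ⟨g, hg, hpg, rfl⟩, hea, hab, hpeb, hpba⟩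
    refine ⟨Fin.snoc (Fin.snoc g a) b, ?_, ?_⟩ <;>
      simp only [Fin.snoc_snoc_comp_swap, Fin.comp_snoc, Fin.strictMono_snoc_iff, Fin.snoc_last,
        Function.comp_apply]
    exacts [⟨⟨hg, hea⟩, hab⟩, ⟨⟨hpg, hpeb⟩, hpba⟩]

def IsHigh (m : ℕ) (p : Fin n → Fin n) (j : Fin n) : Prop :=
  ∃ e, EndsIncreasing m p e ∧ e < j ∧ p e < p j

def HighEquiv (m : ℕ) (p q : Fin n → Fin n) : Prop :=
  (∀ j, IsHigh m p j ↔ IsHigh m q j) ∧ ∀ j, ¬ IsHigh m p j → p j = q j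

variable {p q : Fin n → Fin n}

theorem IsHigh.of_le {x y : Fin n} (hx : IsHigh m p x) (hxy : x ≤ y) (hpxy : p x ≤ p y) :
    IsHigh m p y :=
  let ⟨e, he, hex, hpex⟩ := hx
  ⟨e, he, hex.trans_le hxy, hpex.trans_le hpxy⟩

theorem IsHigh.exists_not_isHigh {j : Fin n} (hj : IsHigh m p j) :
    ∃ s, ¬ IsHigh m p s ∧ EndsIncreasing m p s ∧ s < j ∧ p s < p j := by
  induction j using WellFoundedLT.induction with
  | ind j ih =>
    obtain ⟨e, he, hej, hpej⟩ := hj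
    by_cases heh : IsHigh m p e
    · obtain ⟨s, hs, hse, hsj, hpsj⟩ := ih e hej heh
      exact ⟨s, hs, hse, hsj.trans hej, hpsj.trans hpej⟩
    · exact ⟨e, heh, he, hej, hpej⟩

theorem EndsIncreasing.of_eq_of_not_isHigh {e : Fin n}
    (hpq : ∀ j, ¬ IsHigh m p j → p j = q j) (he : ¬ IsHigh m p e) (h : EndsIncreasing m p e) :
    EndsIncreasing m q e := by
  obtain ⟨g, hg, hpg, rfl⟩ := h
  have hqg : q ∘ g = p ∘ g := funext fun i =>
    (hpq _ fun hi => he (hi.of_le (hg.monotone (Fin.le_last i))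
      (hpg.monotone (Fin.le_last i)))).symm
  exact ⟨g, hg, hqg ▸ hpg, rfl⟩

theorem highEquiv_equivalence : Equivalence (HighEquiv (n := n) m) where
  refl _ := ⟨fun _ => Iff.rfl, fun _ _ => rfl⟩
  symm h := ⟨fun j => (h.1 j).symm, fun j hj => (h.2 j ((h.1 j).not.2 hj)).symm⟩
  trans h h' := ⟨fun j => (h.1 j).trans (h'.1 j),
    fun j hj => (h.2 j hj).trans (h'.2 j ((h.1 j).not.1 hj))⟩

theorem HighEquiv.endsIncreasing_iff (h : HighEquiv m p q) {e : Fin n} (he : ¬ IsHigh m p e) :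
    EndsIncreasing m p e ↔ EndsIncreasing m q e :=
  ⟨.of_eq_of_not_isHigh h.2 he,
    .of_eq_of_not_isHigh (highEquiv_equivalence.symm h).2 ((h.1 e).not.1 he)⟩

theorem highEquiv_of_forall (hout : ∀ j, ¬ IsHigh m p j → p j = q j)
    (hin : ∀ j, IsHigh m p j → ∃ s, ¬ IsHigh m p s ∧ EndsIncreasing m p s ∧ s < j ∧ p s < q j) :
    HighEquiv m p q := by
  have low_of_le : ∀ x y, x ≤ y → q x ≤ q y → ¬ IsHigh m p y → ¬ IsHigh m p x := by
    intro x y hxy hqxy hy hx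
    obtain ⟨s, -, hs, hsx, hpsx⟩ := hin x hx
    exact hy ⟨s, hs, hsx.trans_le hxy, hout y hy ▸ hpsx.trans_le hqxy⟩
  refine ⟨fun j => ⟨fun hj => ?_, fun hj => ?_⟩, hout⟩
  · obtain ⟨s, hs, hse, hsj, hpsj⟩ := hin j hj
    exact ⟨s, hse.of_eq_of_not_isHigh hout hs, hsj, hout s hs ▸ hpsj⟩
  · by_contra hpj
    obtain ⟨_, ⟨g, hg, hqg, rfl⟩, hej, hqej⟩ := hj
    have hlow : ∀ i, ¬ IsHigh m p (g i) := fun i =>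
      low_of_le _ _ (hg.monotone (Fin.le_last i)) (hqg.monotone (Fin.le_last i))
        (low_of_le _ _ hej.le hqej.le hpj)
    have hpg : p ∘ g = q ∘ g := funext fun i => hout _ (hlow i)
    refine hpj ⟨g (Fin.last m), ⟨g, hg, hpg ▸ hqg, rfl⟩, hej, ?_⟩
    rwa [hout _ (hlow _), hout _ hpj]

theorem highEquiv_comp_swap {a b s : Fin n} (ha : IsHigh m p a) (hb : IsHigh m p b)
    (hs : ¬ IsHigh m p s) (hse : EndsIncreasing m p s) (hsa : s < a) (hab : a < b)
    (hpsa : p s < p a) (hpsb : p s < p b) : HighEquiv m p (p ∘ Equiv.swap a b) := by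
  refine highEquiv_of_forall (fun j hj => ?_) (fun j hj => ?_)
  · rw [Function.comp_apply, Equiv.swap_apply_of_ne_of_ne (by rintro rfl; exact hj ha)
      (by rintro rfl; exact hj hb)]
  · by_cases hja : j = a
    · subst hja
      exact ⟨s, hs, hse, hsa, by simpa⟩
    by_cases hjb : j = b
    · subst hjb
      exact ⟨s, hs, hse, hsa.trans hab, by simpa⟩
    rw [Function.comp_apply, Equiv.swap_apply_of_ne_of_ne hja hjb]
    exact hj.exists_not_isHigh

def weight (q : Fin n → Fin n) : ℕ := ∑ j : Fin n, (j : ℕ) * (q j : ℕ)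

theorem weight_comp_swap_lt {a b : Fin n} (hab : a < b) (hq : q a < q b) :
    weight (q ∘ Equiv.swap a b) < weight q := by
  have hsplit : ∀ r : Fin n → Fin n,
      weight r = ∑ j ∈ Finset.univ \ {a, b}, (j : ℕ) * r j + (a * r a + b * r b) := fun r => by
    rw [weight, ← Finset.sum_sdiff (Finset.subset_univ {a, b}), Finset.sum_pair hab.ne]
  have hrest : ∑ j ∈ Finset.univ \ {a, b}, (j : ℕ) * (q ∘ Equiv.swap a b) j =
      ∑ j ∈ Finset.univ \ {a, b}, (j : ℕ) * q j := Finset.sum_congr rfl fun j hj => by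
    simp only [Finset.mem_sdiff, Finset.mem_univ, Finset.mem_insert, Finset.mem_singleton,
      true_and, not_or] at hj
    rw [Function.comp_apply, Equiv.swap_apply_of_ne_of_ne hj.1 hj.2]
  have hab' : (a : ℕ) < b := hab
  have hq' : (q a : ℕ) < q b := hq
  rw [hsplit, hsplit q, hrest]
  simp only [Function.comp_apply, Equiv.swap_apply_left, Equiv.swap_apply_right]
  nlinarith

theorem exists_highEquiv_avoids_id (p : Fin n → Fin n) (hp : Bijective p) :
    ∃ q, Bijective q ∧ HighEquiv m p q ∧ Avoids q (id : Fin (m + 3) → Fin (m + 3)) := by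
  obtain ⟨q, ⟨hq, hpq⟩, hmin⟩ := Set.exists_min_image {q | Bijective q ∧ HighEquiv m p q}
    weight (Set.toFinite _) ⟨p, hp, highEquiv_equivalence.refl p⟩
  refine ⟨q, hq, hpq, fun hc => ?_⟩
  obtain ⟨e, a, b, he, hea, hab, hqea, hqab⟩ := (contains_id_iff q).1 hc
  have ha : IsHigh m q a := ⟨e, he, hea, hqea⟩
  obtain ⟨s, hs, hse, hsa, hqsa⟩ := ha.exists_not_isHigh
  have hswap := highEquiv_comp_swap ha (ha.of_le hab.le hqab.le) hs hse hsa hab hqsa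
    (hqsa.trans hqab)
  exact (hmin _ ⟨hq.comp (Equiv.bijective _), highEquiv_equivalence.trans hpq hswap⟩).not_gt
    (weight_comp_swap_lt hab hqab)

theorem exists_highEquiv_avoids_swap (p : Fin n → Fin n) (hp : Bijective p) :
    ∃ q, Bijective q ∧ HighEquiv m p q ∧
      Avoids q (swapLastTwo m) := by
  obtain ⟨q, ⟨hq, hpq⟩, hmax⟩ := Set.exists_max_image {q | Bijective q ∧ HighEquiv m p q}
    weight (Set.toFinite _) ⟨p, hp, highEquiv_equivalence.refl p⟩
  refine ⟨q, hq, hpq, fun hc => ?_⟩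
  obtain ⟨e, a, b, he, hea, hab, hqeb, hqba⟩ := (contains_swap_iff q).1 hc
  have ha : IsHigh m q a := ⟨e, he, hea, hqeb.trans hqba⟩
  obtain ⟨s, hs, hse, hsa, hqsb⟩ :
      ∃ s, ¬ IsHigh m q s ∧ EndsIncreasing m q s ∧ s < a ∧ q s < q b := by
    by_cases heh : IsHigh m q e
    · obtain ⟨s, hs, hse, hse', hqse⟩ := heh.exists_not_isHigh
      exact ⟨s, hs, hse, hse'.trans hea, hqse.trans hqeb⟩
    · exact ⟨e, heh, he, hea, hqeb⟩
  have hswap := highEquiv_comp_swap ha ⟨e, he, hea.trans hab, hqeb⟩ hs hse hsa hab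
    (hqsb.trans hqba) hqsb
  have hlt := weight_comp_swap_lt (q := q ∘ Equiv.swap a b) hab (by simpa using hqba)
  rw [show (q ∘ Equiv.swap a b) ∘ Equiv.swap a b = q from
    funext fun j => by simp [Equiv.swap_apply_self]] at hlt
  exact (hmax _ ⟨hq.comp (Equiv.bijective _), highEquiv_equivalence.trans hpq hswap⟩).not_gt hlt

theorem exists_gt_apply_eq {r₁ r₂ : Fin n → Fin n} (h₁ : Surjective r₁) (h₂ : Injective r₂)
    {j : Fin n} (hagree : ∀ l < j, r₁ l = r₂ l) (hne : r₁ j ≠ r₂ j) :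
    ∃ b, j < b ∧ r₁ b = r₂ j := by
  obtain ⟨b, hb⟩ := h₁ (r₂ j)
  refine ⟨b, lt_of_not_ge fun hbj => ?_, hb⟩
  rcases hbj.lt_or_eq with hbj | rfl
  · exact hbj.ne (h₂ ((hagree b hbj).symm.trans hb))
  · exact hne hb

theorem HighEquiv.eq_of_forall_isHigh (h : HighEquiv m p q)
    (hstep : ∀ j, IsHigh m p j → (∀ l < j, p l = q l) → p j = q j) : p = q := by
  funext j
  induction j using WellFoundedLT.induction with
  | ind j ih =>
    by_cases hj : IsHigh m p j
    exacts [hstep j hj ih, h.2 j hj]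

theorem HighEquiv.eq_of_avoids_id (h : HighEquiv m p q) (hp : Bijective p) (hq : Bijective q)
    (hpa : Avoids p (id : Fin (m + 3) → Fin (m + 3)))
    (hqa : Avoids q (id : Fin (m + 3) → Fin (m + 3))) : p = q := by
  have key : ∀ {r₁ r₂ : Fin n → Fin n}, Bijective r₁ → Bijective r₂ →
      Avoids r₁ (id : Fin (m + 3) → Fin (m + 3)) →
      ∀ j, IsHigh m r₁ j → (∀ l < j, r₁ l = r₂ l) → ¬ r₁ j < r₂ j := by
    rintro r₁ r₂ h₁ h₂ ha j ⟨e, he, hej, hrej⟩ hagree hlt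
    obtain ⟨b, hjb, hb⟩ := exists_gt_apply_eq h₁.surjective h₂.injective hagree hlt.ne
    exact ha ((contains_id_iff r₁).2 ⟨e, j, b, he, hej, hjb, hrej, hb ▸ hlt⟩)
  refine h.eq_of_forall_isHigh fun j hj hagree => le_antisymm ?_ ?_
  · exact not_lt.1 (key hq hp hqa j ((h.1 j).1 hj) fun l hl => (hagree l hl).symm)
  · exact not_lt.1 (key hp hq hpa j hj hagree)

theorem HighEquiv.eq_of_avoids_swap (h : HighEquiv m p q) (hp : Bijective p) (hq : Bijective q)
    (hpa : Avoids p (swapLastTwo m))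
    (hqa : Avoids q (swapLastTwo m)) : p = q := by
  have key : ∀ {r₁ r₂ : Fin n → Fin n}, HighEquiv m r₁ r₂ → Bijective r₁ → Bijective r₂ →
      Avoids r₁ (swapLastTwo m) →
      ∀ j, IsHigh m r₂ j → (∀ l < j, r₁ l = r₂ l) → ¬ r₂ j < r₁ j := by
    intro r₁ r₂ h₁₂ h₁ h₂ ha j hj hagree hlt
    obtain ⟨b, hjb, hb⟩ := exists_gt_apply_eq h₁.surjective h₂.injective hagree hlt.ne'
    obtain ⟨s, hs, hse, hsj, hrsj⟩ := hj.exists_not_isHigh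
    have hs₁ : ¬ IsHigh m r₁ s := (h₁₂.1 s).not.2 hs
    refine ha ((contains_swap_iff r₁).2 ⟨s, j, b, (h₁₂.endsIncreasing_iff hs₁).2 hse, hsj, hjb,
      ?_, hb ▸ hlt⟩)
    rwa [hb, h₁₂.2 s hs₁]
  refine h.eq_of_forall_isHigh fun j hj hagree => le_antisymm ?_ ?_
  · exact not_lt.1 (key h hp hq hpa j ((h.1 j).1 hj) hagree)
  · exact not_lt.1 (key (highEquiv_equivalence.symm h) hq hp hqa j hj
      fun l hl => (hagree l hl).symm)

theorem IsHigh.apply_lt_of_not_isHigh (hq : Injective q) {a b : Fin n} (hb : IsHigh m q b)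
    (ha : ¬ IsHigh m q a) (hba : (b : ℕ) ≤ a + 1) : q a < q b := by
  obtain ⟨e, he, heb, hqeb⟩ := hb
  rcases (show e ≤ a from Fin.le_def.2 (by have := Fin.lt_def.1 heb; omega)).lt_or_eq
    with hea | rfl
  · exact (lt_of_le_of_ne (not_lt.1 fun h => ha ⟨e, he, hea, h⟩) (hq.ne hea.ne')).trans hqeb
  · exact hqeb

theorem Alternating.of_highEquiv (hp : Alternating p)
    (heven : ∀ j : Fin n, (j : ℕ) % 2 = 0 → ¬ IsHigh m p j) (h : HighEquiv m p q)
    (hq : Injective q) : Alternating q := by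
  intro i hi
  set a : Fin n := ⟨i, by omega⟩
  set b : Fin n := ⟨i + 1, hi⟩
  by_cases hab : IsHigh m p a ∨ IsHigh m p b
  · rcases Nat.mod_two_eq_zero_or_one i with hi2 | hi2
    · have ha : ¬ IsHigh m p a := heven a hi2
      have hb : IsHigh m q b := (h.1 b).1 (hab.resolve_left ha)
      simpa [hi2] using hb.apply_lt_of_not_isHigh hq ((h.1 a).not.1 ha) (by simp [a, b])
    · have hb : ¬ IsHigh m p b := heven b (by simp [b]; omega)
      have ha : IsHigh m q a := (h.1 a).1 (hab.resolve_right hb)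
      simpa [hi2] using (ha.apply_lt_of_not_isHigh hq ((h.1 b).not.1 hb) (by simp [a, b]; omega)).le
  · obtain ⟨ha, hb⟩ := not_or.1 hab
    rw [← h.2 a ha, ← h.2 b hb]
    exact hp i hi

theorem not_isHigh_of_avoids_id (hn : Even n) (hp : Alternating p)
    (hpa : Avoids p (id : Fin (m + 3) → Fin (m + 3))) (j : Fin n) (hj : (j : ℕ) % 2 = 0) :
    ¬ IsHigh m p j := by
  rintro ⟨e, he, hej, hpej⟩
  have hj1 : (j : ℕ) + 1 < n := by obtain ⟨r, hr⟩ := hn; have := j.2; omega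
  exact hpa ((contains_id_iff p).2 ⟨e, j, ⟨j + 1, hj1⟩, he, hej, Fin.lt_def.2 (by simp), hpej,
    (hp j hj1).2 hj⟩)

theorem not_isHigh_of_avoids_swap (hp : Alternating p) (hpi : Injective p)
    (hpa : Avoids p (swapLastTwo m))
    (j : Fin n) (hj : (j : ℕ) % 2 = 0) : ¬ IsHigh m p j := by
  rintro ⟨e, he, hej, hpej⟩
  obtain ⟨i, hi⟩ : ∃ i, (j : ℕ) = i + 1 := ⟨j - 1, by have := Fin.lt_def.1 hej; omega⟩
  set a : Fin n := ⟨i, by omega⟩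
  have hja : j = ⟨i + 1, by omega⟩ := Fin.ext hi
  have hpja : p j < p a := by
    refine lt_of_le_of_ne (not_lt.1 ?_) (hpi.ne (by simp [Fin.ext_iff, a]; omega))
    rw [hja, hp i (by omega)]
    omega
  have hea : e < a := by
    refine lt_of_le_of_ne (Fin.le_def.2 (by have := Fin.lt_def.1 hej; simp [a]; omega)) ?_
    intro hea
    rw [hea] at hpej
    exact hpej.not_gt hpja
  exact hpa ((contains_swap_iff p).2 ⟨e, a, j, he, hea, Fin.lt_def.2 (by simp [a]; omega), hpej,
    hpja⟩)

end

theorem Nat.card_eq_of_equivalence {α : Type*} {r : α → α → Prop} (hr : Equivalence r)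
    {P Q : α → Prop} (hPQ : ∀ x, P x → ∃ y, Q y ∧ r x y) (hQP : ∀ y, Q y → ∃ x, P x ∧ r x y)
    (hP : ∀ x x', P x → P x' → r x x' → x = x') (hQ : ∀ y y', Q y → Q y' → r y y' → y = y') :
    Nat.card {x // P x} = Nat.card {y // Q y} := by
  choose f hfQ hf using hPQ
  refine Nat.card_eq_of_bijective (fun x => ⟨f x x.2, hfQ x x.2⟩)
    ⟨fun x x' hxx' => ?_, fun y => ?_⟩
  · have hfx : f x x.2 = f x' x'.2 := congrArg Subtype.val hxx'
    exact Subtype.ext (hP _ _ x.2 x'.2 (hr.trans (hf x x.2) (hfx ▸ hr.symm (hf x' x'.2))))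
  · obtain ⟨x, hx, hxy⟩ := hQP y y.2
    exact ⟨⟨x, hx⟩, Subtype.ext (hQ _ _ (hfQ x hx) y.2 (hr.trans (hr.symm (hf x hx)) hxy))⟩

theorem stmt8 (k n : ℕ) (hk : 3 ≤ k) (hn : Even n) :
    Nat.card {p : Fin n → Fin n // Function.Bijective p ∧ Alternating p ∧
      Avoids p (id : Fin k → Fin k)} =
    Nat.card {p : Fin n → Fin n // Function.Bijective p ∧ Alternating p ∧
      Avoids p ⇑(Equiv.swap (⟨k - 2, by omega⟩ : Fin k) ⟨k - 1, by omega⟩)} := by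
  obtain ⟨m, rfl⟩ := Nat.exists_eq_add_of_le' hk
  refine Nat.card_eq_of_equivalence (highEquiv_equivalence (m := m)) ?_ ?_ ?_ ?_
  · rintro p ⟨hp, hpalt, hpa⟩
    obtain ⟨q, hq, hpq, hqa⟩ := exists_highEquiv_avoids_swap p hp
    have hqalt := hpalt.of_highEquiv (not_isHigh_of_avoids_id hn hpalt hpa) hpq hq.injective
    exact ⟨q, ⟨hq, hqalt, hqa⟩, hpq⟩
  · rintro q ⟨hq, hqalt, hqa⟩
    obtain ⟨p, hp, hqp, hpa⟩ := exists_highEquiv_avoids_id q hq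
    have hpalt :=
      hqalt.of_highEquiv (not_isHigh_of_avoids_swap hqalt hq.injective hqa) hqp hp.injective
    exact ⟨p, ⟨hp, hpalt, hpa⟩, highEquiv_equivalence.symm hqp⟩
  · exact fun p p' ⟨hp, _, hpa⟩ ⟨hp', _, hpa'⟩ h => h.eq_of_avoids_id hp hp' hpa hpa'
  · exact fun q q' ⟨hq, _, hqa⟩ ⟨hq', _, hqa'⟩ h => h.eq_of_avoids_swap hq hq' hqa hqa'
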